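/- Let X be a separable globally hyperbolic poset. If (π_n) is a sequence of causal curves converging to a causal curve π in the Vietoris topology on compact subsets of X, and the sequences of endpoints (π_n(0)) and (π_n(1)) both converge, then π_n(0) → π(0) and π_n(1) → π(1). -/
import Mathlib


/-- `x` is way below `y`. -/
def wayBelow {P : Type*} [Preorder P] (x y : P) : Prop :=
  ∀ S : Set P, S.Nonempty → DirectedOn (· ≤ ·) S → ∀ s : P, IsLUB S s → y ≤ s →
    ∃ z ∈ S, x ≤ z

/-- A poset is a dcpo if every nonempty directed subset has a supremum. -/
def IsDcpo (P : Type*) [Preorder P] : Prop :=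
  ∀ S : Set P, S.Nonempty → DirectedOn (· ≤ ·) S → ∃ s : P, IsLUB S s

/-- `B` is a (domain-theoretic) basis for `P`. -/
def IsDomainBasis {P : Type*} [Preorder P] (B : Set P) : Prop :=
  ∀ x : P, ∃ S : Set P, S ⊆ B ∧ S.Nonempty ∧ DirectedOn (· ≤ ·) S ∧
    (∀ a ∈ S, wayBelow a x) ∧ IsLUB S x

/-- A poset is continuous if it has a basis (equivalently, the whole poset is a basis). -/
def IsContinuousPoset (P : Type*) [Preorder P] : Prop :=
  IsDomainBasis (Set.univ : Set P)

/-- The Scott topology on a poset. -/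
def scottTop (P : Type*) [Preorder P] : TopologicalSpace P where
  IsOpen U := (∀ x ∈ U, ∀ y, x ≤ y → y ∈ U) ∧
    ∀ S : Set P, S.Nonempty → DirectedOn (· ≤ ·) S → ∀ s : P, IsLUB S s → s ∈ U →
      (S ∩ U).Nonempty
  isOpen_univ := ⟨fun _ _ _ _ => trivial,
    fun S hS _ _ _ _ => hS.imp fun x hx => ⟨hx, trivial⟩⟩
  isOpen_inter := by
    rintro U V ⟨hUup, hUin⟩ ⟨hVup, hVin⟩
    refine ⟨fun x hx y hxy => ⟨hUup x hx.1 y hxy, hVup x hx.2 y hxy⟩, ?_⟩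
    rintro S hS hdir s hs ⟨hsU, hsV⟩
    obtain ⟨a, haS, haU⟩ := hUin S hS hdir s hs hsU
    obtain ⟨b, hbS, hbV⟩ := hVin S hS hdir s hs hsV
    obtain ⟨c, hcS, hac, hbc⟩ := hdir a haS b hbS
    exact ⟨c, hcS, hUup a haU c hac, hVup b hbV c hbc⟩
  isOpen_sUnion := by
    intro C hC
    refine ⟨fun x hx y hxy => ?_, ?_⟩
    · obtain ⟨t, htC, hxt⟩ := hx
      exact ⟨t, htC, (hC t htC).1 x hxt y hxy⟩
    · rintro S hS hdir s hs ⟨t, htC, hst⟩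
      obtain ⟨a, haS, hat⟩ := (hC t htC).2 S hS hdir s hs hst
      exact ⟨a, haS, t, htC, hat⟩

/-- A continuous poset is bicontinuous if the way-below relation admits the dual
characterization via filtered infima and each `↟x` is filtered with infimum `x`. -/
def IsBicontinuous (P : Type*) [Preorder P] : Prop :=
  IsContinuousPoset P ∧
  (∀ x y : P, wayBelow x y ↔
    ∀ S : Set P, S.Nonempty → DirectedOn (· ≥ ·) S → ∀ i : P, IsGLB S i → i ≤ x →
      ∃ s ∈ S, s ≤ y) ∧
  (∀ x : P, {a | wayBelow x a}.Nonempty ∧ DirectedOn (· ≥ ·) {a | wayBelow x a} ∧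
    IsGLB {a | wayBelow x a} x)

/-- The interval topology on a bicontinuous poset, with basic open sets
`(a,b) = {x | a ≪ x ≪ b}`. -/
def intervalTop (P : Type*) [Preorder P] : TopologicalSpace P :=
  .generateFrom {s | ∃ a b : P, s = {x | wayBelow a x ∧ wayBelow x b}}

/-- A globally hyperbolic poset: bicontinuous, with all closed intervals compact
in the interval topology. -/
def IsGloballyHyperbolic (P : Type*) [PartialOrder P] : Prop :=
  IsBicontinuous P ∧ ∀ a b : P, a ≤ b → @IsCompact P (intervalTop P) (Set.Icc a b)

variable (X : Type*) [PartialOrder X]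

/-- Nonempty subsets of `X` compact in the interval topology. -/
def NEC := {K : Set X // K.Nonempty ∧ @IsCompact X (intervalTop X) K}

/-- The Vietoris topology on the nonempty compact subsets of `X` (with its
interval topology), with basic open sets
`σ(U₁,…,Uₙ) = {K | K ⊆ ⋃ Uᵢ and K ∩ Uᵢ ≠ ∅ for all i}`. -/
def vietoris : TopologicalSpace (NEC X) :=
  .generateFrom {s | ∃ (n : ℕ) (U : Fin n → Set X),
    (∀ i, @IsOpen X (intervalTop X) (U i)) ∧
    s = {K : NEC X | K.1 ⊆ ⋃ i, U i ∧ ∀ i, (K.1 ∩ U i).Nonempty}}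

/-- `X` is separable as a continuous poset: it has a countable basis. -/
def SeparablePoset : Prop := ∃ B : Set X, B.Countable ∧ IsDomainBasis B

/-- A causal curve in a globally hyperbolic poset: a compact, connected,
linearly ordered subset. -/
def IsCausalCurve (π : Set X) : Prop :=
  @IsCompact X (intervalTop X) π ∧ @IsConnected X (intervalTop X) π ∧
    IsChain (· ≤ ·) π

section Aux
variable {P : Type*} [Preorder P]

lemma wayBelow_le {a b : P} (h : wayBelow a b) : a ≤ b := by
  obtain ⟨z, hz, haz⟩ := h {b} ⟨b, rfl⟩
    (fun x hx y hy => ⟨b, rfl, hx ▸ le_refl b, hy ▸ le_refl b⟩) b isLUB_singleton le_rfl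
  cases hz; exact haz

lemma le_wayBelow {a b c : P} (hab : a ≤ b) (h : wayBelow b c) : wayBelow a c := by
  intro S hne hdir s hs hle
  obtain ⟨z, hz, hbz⟩ := h S hne hdir s hs hle
  exact ⟨z, hz, hab.trans hbz⟩

lemma wayBelow_le' {a b c : P} (h : wayBelow a b) (hbc : b ≤ c) : wayBelow a c := by
  intro S hne hdir s hs hle
  exact h S hne hdir s hs (hbc.trans hle)

/-- Interpolation in a continuous poset. -/
lemma interpolate (hcont : IsContinuousPoset P) {a x : P} (h : wayBelow a x) :
    ∃ c, wayBelow a c ∧ wayBelow c x := by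
  obtain ⟨S, -, hSne, hSdir, hSwb, hSlub⟩ := hcont x
  set E : Set P := {e | ∃ d ∈ S, wayBelow e d} with hE
  have hEne : E.Nonempty := by
    obtain ⟨d, hd⟩ := hSne
    obtain ⟨T, -, hTne, -, hTwb, -⟩ := hcont d
    obtain ⟨t, ht⟩ := hTne
    exact ⟨t, d, hd, hTwb t ht⟩
  have hEdir : DirectedOn (· ≤ ·) E := by
    rintro e1 ⟨d1, hd1, he1⟩ e2 ⟨d2, hd2, he2⟩
    obtain ⟨d, hd, h1d, h2d⟩ := hSdir d1 hd1 d2 hd2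
    obtain ⟨T, -, hTne, hTdir, hTwb, hTlub⟩ := hcont d
    obtain ⟨z1, hz1, he1z⟩ := (wayBelow_le' he1 h1d) T hTne hTdir d hTlub le_rfl
    obtain ⟨z2, hz2, he2z⟩ := (wayBelow_le' he2 h2d) T hTne hTdir d hTlub le_rfl
    obtain ⟨z, hz, h1z, h2z⟩ := hTdir z1 hz1 z2 hz2
    exact ⟨z, ⟨d, hd, hTwb z hz⟩, he1z.trans h1z, he2z.trans h2z⟩
  have hElub : IsLUB E x := by
    constructor
    · rintro e ⟨d, hd, he⟩
      exact (wayBelow_le he).trans (hSlub.1 hd)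
    · intro u hu
      refine hSlub.2 fun d hd => ?_
      obtain ⟨T, -, -, -, hTwb, hTlub⟩ := hcont d
      exact hTlub.2 fun t ht => hu ⟨d, hd, hTwb t ht⟩
  obtain ⟨e, ⟨d, hd, hed⟩, hae⟩ := h E hEne hEdir x hElub le_rfl
  exact ⟨d, le_wayBelow hae hed, hSwb d hd⟩

/-- Dual interpolation in a bicontinuous poset. -/
lemma interpolate' (hbi : IsBicontinuous P) {x b : P} (h : wayBelow x b) :
    ∃ d, wayBelow x d ∧ wayBelow d b := by
  obtain ⟨-, hdual, hfilt⟩ := hbi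
  set E : Set P := {e | ∃ d, wayBelow x d ∧ wayBelow d e} with hE
  have hEne : E.Nonempty := by
    obtain ⟨d, hd⟩ := (hfilt x).1
    obtain ⟨e, he⟩ := (hfilt d).1
    exact ⟨e, d, hd, he⟩
  have hEdir : DirectedOn (· ≥ ·) E := by
    rintro e1 ⟨d1, hxd1, he1⟩ e2 ⟨d2, hxd2, he2⟩
    obtain ⟨d, hd, h1d, h2d⟩ := (hfilt x).2.1 d1 hxd1 d2 hxd2
    obtain ⟨e, he, h1e, h2e⟩ := (hfilt d).2.1 e1 (le_wayBelow h1d he1) e2 (le_wayBelow h2d he2)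
    exact ⟨e, ⟨d, hd, he⟩, h1e, h2e⟩
  have hEglb : IsGLB E x := by
    constructor
    · rintro e ⟨d, hxd, hde⟩
      exact (wayBelow_le hxd).trans (wayBelow_le hde)
    · intro u hu
      refine (hfilt x).2.2.2 fun d hd => ?_
      exact (hfilt d).2.2.2 fun e he => hu ⟨d, hd, he⟩
  obtain ⟨e, ⟨d, hxd, hde⟩, heb⟩ := (hdual x b).1 h E hEne hEdir x hEglb le_rfl
  exact ⟨d, hxd, wayBelow_le' hde heb⟩

/-- `↟a` is open in the interval topology on a bicontinuous poset. -/
lemma isOpen_Up (hbi : IsBicontinuous P) (a : P) :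
    @IsOpen P (intervalTop P) {y | wayBelow a y} := by
  letI : TopologicalSpace P := intervalTop P
  have : {y | wayBelow a y} =
      ⋃₀ {s | (∃ c b : P, s = {x | wayBelow c x ∧ wayBelow x b}) ∧ s ⊆ {y | wayBelow a y}} := by
    ext x
    constructor
    · intro hx
      obtain ⟨c, hac, hcx⟩ := interpolate hbi.1 hx
      obtain ⟨d, hd⟩ := (hbi.2.2 x).1
      refine ⟨{y | wayBelow c y ∧ wayBelow y d}, ⟨⟨c, d, rfl⟩, ?_⟩, hcx, hd⟩
      rintro y ⟨hcy, -⟩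
      exact le_wayBelow (wayBelow_le hac) hcy
    · rintro ⟨s, ⟨-, hs⟩, hxs⟩
      exact hs hxs
  rw [this]
  exact isOpen_sUnion fun s hs =>
    TopologicalSpace.isOpen_generateFrom_of_mem hs.1

/-- `↡b` is open in the interval topology on a bicontinuous poset. -/
lemma isOpen_Down (hbi : IsBicontinuous P) (b : P) :
    @IsOpen P (intervalTop P) {y | wayBelow y b} := by
  letI : TopologicalSpace P := intervalTop P
  have : {y | wayBelow y b} =
      ⋃₀ {s | (∃ c d : P, s = {x | wayBelow c x ∧ wayBelow x d}) ∧ s ⊆ {y | wayBelow y b}} := by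
    ext x
    constructor
    · intro hx
      obtain ⟨d, hxd, hdb⟩ := interpolate' hbi hx
      obtain ⟨T, -, hTne, -, hTwb, -⟩ := hbi.1 x
      obtain ⟨c, hc⟩ := hTne
      refine ⟨{y | wayBelow c y ∧ wayBelow y d}, ⟨⟨c, d, rfl⟩, ?_⟩, hTwb c hc, hxd⟩
      rintro y ⟨-, hyd⟩
      exact wayBelow_le' hyd (wayBelow_le hdb)
    · rintro ⟨s, ⟨-, hs⟩, hxs⟩
      exact hs hxs
  rw [this]
  exact isOpen_sUnion fun s hs =>
    TopologicalSpace.isOpen_generateFrom_of_mem hs.1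

end Aux

/-- If causal curves `πₙ` converge to a causal curve `π` in the Vietoris
topology and the endpoint sequences `πₙ(0)`, `πₙ(1)` converge, then
`πₙ(0) → π(0)` and `πₙ(1) → π(1)`. -/

theorem endpoints_converge (hX : IsGloballyHyperbolic X) (hsep : SeparablePoset X)
    (πn : ℕ → NEC X) (hπn : ∀ n, IsCausalCurve X (πn n).1)
    (π : NEC X) (hπ : IsCausalCurve X π.1)
    (p q : ℕ → X)
    (hp : ∀ n, IsLeast (πn n).1 (p n)) (hq : ∀ n, IsGreatest (πn n).1 (q n))
    (p0 q1 : X) (hp0 : IsLeast π.1 p0) (hq1 : IsGreatest π.1 q1)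
    (hconv : Filter.Tendsto πn Filter.atTop (@nhds (NEC X) (vietoris X) π))
    (ha : ∃ a : X, Filter.Tendsto p Filter.atTop (@nhds X (intervalTop X) a))
    (hb : ∃ b : X, Filter.Tendsto q Filter.atTop (@nhds X (intervalTop X) b)) :
    Filter.Tendsto p Filter.atTop (@nhds X (intervalTop X) p0) ∧
    Filter.Tendsto q Filter.atTop (@nhds X (intervalTop X) q1) := by
  letI : TopologicalSpace (NEC X) := vietoris X
  obtain ⟨hbi, -⟩ := hX
  constructor
  · rw [show intervalTop X = TopologicalSpace.generateFrom _ from rfl]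
    rw [TopologicalSpace.tendsto_nhds_generateFrom_iff]
    rintro s ⟨a, b, rfl⟩ ⟨hap0, hp0b⟩
    -- Vietoris open set: σ((a,b), ↟a)
    set U : Fin 2 → Set X :=
      ![{x | wayBelow a x ∧ wayBelow x b}, {y | wayBelow a y}] with hU
    have hUopen : ∀ i, @IsOpen X (intervalTop X) (U i) := by
      intro i
      fin_cases i
      · exact TopologicalSpace.isOpen_generateFrom_of_mem ⟨a, b, rfl⟩
      · exact isOpen_Up hbi a
    set σ : Set (NEC X) :=
      {K : NEC X | K.1 ⊆ ⋃ i, U i ∧ ∀ i, (K.1 ∩ U i).Nonempty} with hσ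
    have hσopen : @IsOpen (NEC X) (vietoris X) σ :=
      TopologicalSpace.isOpen_generateFrom_of_mem ⟨2, U, hUopen, rfl⟩
    have hπσ : π ∈ σ := by
      refine ⟨fun x hx => Set.mem_iUnion.2 ⟨1, wayBelow_le' ?_ (hp0.2 hx)⟩, fun i => ?_⟩
      · exact hap0
      · fin_cases i
        · exact ⟨p0, hp0.1, hap0, hp0b⟩
        · exact ⟨p0, hp0.1, hap0⟩
    have hev : ∀ᶠ n in Filter.atTop, πn n ∈ σ :=
      hconv.eventually (hσopen.mem_nhds hπσ)
    filter_upwards [hev] with n hn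
    obtain ⟨hsub, hint⟩ := hn
    constructor
    · -- wayBelow a (p n)
      obtain ⟨i, hi⟩ := Set.mem_iUnion.1 (hsub (hp n).1)
      fin_cases i
      · exact hi.1
      · exact hi
    · -- wayBelow (p n) b
      obtain ⟨x, hxπ, -, hxb⟩ := hint 0
      exact le_wayBelow ((hp n).2 hxπ) hxb
  · rw [show intervalTop X = TopologicalSpace.generateFrom _ from rfl]
    rw [TopologicalSpace.tendsto_nhds_generateFrom_iff]
    rintro s ⟨a, b, rfl⟩ ⟨haq1, hq1b⟩
    set U : Fin 2 → Set X :=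
      ![{x | wayBelow a x ∧ wayBelow x b}, {y | wayBelow y b}] with hU
    have hUopen : ∀ i, @IsOpen X (intervalTop X) (U i) := by
      intro i
      fin_cases i
      · exact TopologicalSpace.isOpen_generateFrom_of_mem ⟨a, b, rfl⟩
      · exact isOpen_Down hbi b
    set σ : Set (NEC X) :=
      {K : NEC X | K.1 ⊆ ⋃ i, U i ∧ ∀ i, (K.1 ∩ U i).Nonempty} with hσ
    have hσopen : @IsOpen (NEC X) (vietoris X) σ :=
      TopologicalSpace.isOpen_generateFrom_of_mem ⟨2, U, hUopen, rfl⟩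
    have hπσ : π ∈ σ := by
      refine ⟨fun x hx => Set.mem_iUnion.2 ⟨1, wayBelow_le' ?_ (le_refl b)⟩, fun i => ?_⟩
      · exact fun S hne hdir s hs hbs => hq1b S hne hdir s hs hbs |>.imp
          fun z hz => ⟨hz.1, (hq1.2 hx).trans hz.2⟩
      · fin_cases i
        · exact ⟨q1, hq1.1, haq1, hq1b⟩
        · exact ⟨q1, hq1.1, hq1b⟩
    have hev : ∀ᶠ n in Filter.atTop, πn n ∈ σ :=
      hconv.eventually (hσopen.mem_nhds hπσ)
    filter_upwards [hev] with n hn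
    obtain ⟨hsub, hint⟩ := hn
    constructor
    · -- wayBelow a (q n)
      obtain ⟨x, hxπ, hax, -⟩ := hint 0
      intro S hne hdir s hs hle
      exact hax S hne hdir s hs (((hq n).2 hxπ).trans hle)
    · -- wayBelow (q n) b
      obtain ⟨i, hi⟩ := Set.mem_iUnion.1 (hsub (hq n).1)
      fin_cases i
      · exact hi.2
      · exact hi
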